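/- In a bumpless pipe dream or almost bumpless pipe dream, suppose p = π(x) and q = π(y) are two pipes that cross exactly once and bump exactly once, and that the r-shaped corner in the bump tile belongs to p. If the positions of the cross tile and the bump tile are swapped (replacing the bump tile by a '+'-tile and the '+'-tile where p and q crossed by a bump tile), then in the new bump tile the j-shaped turn belongs to p. -/

import Mathlib

namespace BPD

/-- The six legal tiles of a bumpless pipe dream, plus the `Bump` tile
(used in *almost* bumpless pipe dreams). -/
inductive Tile : Type
  | R      -- pipe turning from the south edge to the east edge ("r-tile")
  | J      -- pipe turning from the west edge to the north edge ("j-tile")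
  | Cross  -- two pipes crossing ("+"-tile)
  | Blank  -- blank tile
  | H      -- horizontal pipe segment ("−"-tile)
  | V      -- vertical pipe segment ("|"-tile)
  | Bump   -- bump tile: one r-shaped turn and one j-shaped turn
  deriving DecidableEq

instance instFintypeTile : Fintype Tile :=
  ⟨{Tile.R, Tile.J, Tile.Cross, Tile.Blank, Tile.H, Tile.V, Tile.Bump}, by
    intro x; cases x <;> first | decide | simp⟩

/-- A tiling of the n×n grid, in matrix coordinates (row, column). -/
abbrev Tiling (n : ℕ) := Fin n → Fin n → Tile

namespace Tile

/-- Does a tile carry a pipe on its south edge? -/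
def southE : Tile → Bool
  | R => true | Cross => true | V => true | Bump => true | _ => false

/-- Does a tile carry a pipe on its east edge? -/
def eastE : Tile → Bool
  | R => true | Cross => true | H => true | Bump => true | _ => false

/-- Does a tile carry a pipe on its north edge? -/
def northE : Tile → Bool
  | J => true | Cross => true | V => true | Bump => true | _ => false

/-- Does a tile carry a pipe on its west edge? -/
def westE : Tile → Bool
  | J => true | Cross => true | H => true | Bump => true | _ => false

end Tile

/-- Edge-matching and boundary conditions: adjacent tiles agree on their shared
edge; every column carries a pipe through the south boundary, every row carries a
pipe through the east boundary, and no pipe touches the north or west boundary.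
This says exactly that the tiling consists of `n` pipes, each traveling from the
south boundary to the east boundary. -/
def Wellformed {n : ℕ} (T : Tiling n) : Prop :=
  (∀ i j : Fin n, ∀ h : (j : ℕ) + 1 < n,
      Tile.eastE (T i j) = Tile.westE (T i ⟨(j : ℕ) + 1, h⟩)) ∧
  (∀ i j : Fin n, ∀ h : (i : ℕ) + 1 < n,
      Tile.southE (T i j) = Tile.northE (T ⟨(i : ℕ) + 1, h⟩ j)) ∧
  (∀ j : Fin n, Tile.southE (T ⟨n - 1, by have := j.2; omega⟩ j) = true) ∧
  (∀ i : Fin n, Tile.eastE (T i ⟨n - 1, by have := i.2; omega⟩) = true) ∧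
  (∀ j : Fin n, Tile.northE (T ⟨0, by have := j.2; omega⟩ j) = false) ∧
  (∀ i : Fin n, Tile.westE (T i ⟨0, by have := i.2; omega⟩) = false)

/-- The state of a pipe while being traced through the grid:
`inside i j up` means the pipe is in cell `(i,j)`, having entered from the south
edge (`up = true`, traveling upward) or from the west edge (`up = false`,
traveling rightward); `exited r` means the pipe has left through the east
boundary at row `r`. -/
inductive PState (n : ℕ) : Type
  | inside (i j : Fin n) (up : Bool)
  | exited (row : Fin n)
  | stuck
  deriving DecidableEq

/-- Exit a cell through its east edge. -/
def goEast {n : ℕ} (i j : Fin n) : PState n :=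
  if h : (j : ℕ) + 1 < n then PState.inside i ⟨(j : ℕ) + 1, h⟩ false
  else PState.exited i

/-- Exit a cell through its north edge. -/
def goNorth {n : ℕ} (i j : Fin n) : PState n :=
  if h : 0 < (i : ℕ) then PState.inside ⟨(i : ℕ) - 1, by have := i.2; omega⟩ j true
  else PState.stuck

/-- One step of tracing a pipe through a tiling. -/
def stepSt {n : ℕ} (T : Tiling n) : PState n → PState n
  | PState.inside i j up =>
    match up, T i j with
    | true, Tile.R => goEast i j
    | true, Tile.V => goNorth i j
    | true, Tile.Cross => goNorth i j
    | true, Tile.Bump => goEast i j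
    | false, Tile.J => goNorth i j
    | false, Tile.H => goEast i j
    | false, Tile.Cross => goEast i j
    | false, Tile.Bump => goNorth i j
    | _, _ => PState.stuck
  | PState.exited r => PState.exited r
  | PState.stuck => PState.stuck

/-- The starting state of the pipe entering the grid at the south boundary in
column `c` (0-indexed): it enters cell `(n-1, c)` from the south. -/
def start {n : ℕ} (c : Fin n) : PState n :=
  PState.inside ⟨n - 1, by have := c.2; omega⟩ c true

/-- The pipe entering at the south boundary in column `c` reaches the state `s`. -/
def reaches {n : ℕ} (T : Tiling n) (c : Fin n) (s : PState n) : Prop :=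
  ∃ k : ℕ, (stepSt T)^[k] (start c) = s

/-- The tiling realizes the permutation `π`: for every row `i` of the east
boundary, the pipe exiting there is the one labeled `π i`, i.e. the one
entering at the south boundary in column `π i` (0-indexed). -/
def TracesTo {n : ℕ} (T : Tiling n) (π : Equiv.Perm (Fin n)) : Prop :=
  ∀ i : Fin n, reaches T (π i) (PState.exited i)

/-- The pipes (labeled by their entry columns) `p` and `q` cross at the
'+'-tile in position `(r, c)`. -/
def crossingAt {n : ℕ} (T : Tiling n) (p q : Fin n) (r c : Fin n) : Prop :=
  T r c = Tile.Cross ∧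
    ((reaches T p (PState.inside r c true) ∧ reaches T q (PState.inside r c false)) ∨
     (reaches T p (PState.inside r c false) ∧ reaches T q (PState.inside r c true)))

/-- No two pipes cross twice. -/
def Reduced {n : ℕ} (T : Tiling n) : Prop :=
  ∀ p q r₁ c₁ r₂ c₂ : Fin n,
    crossingAt T p q r₁ c₁ → crossingAt T p q r₂ c₂ → (r₁, c₁) = (r₂, c₂)

/-- `T` is a (reduced) bumpless pipe dream of the permutation `π`. -/
def IsBPD {n : ℕ} (T : Tiling n) (π : Equiv.Perm (Fin n)) : Prop :=
  Wellformed T ∧ (∀ i j : Fin n, T i j ≠ Tile.Bump) ∧ TracesTo T π ∧ Reduced T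

/-- `T` is an *almost* bumpless pipe dream of `π`, with its unique bump tile at
position `(i, j)`. -/
def IsAlmostBPD {n : ℕ} (T : Tiling n) (π : Equiv.Perm (Fin n)) (i j : Fin n) : Prop :=
  Wellformed T ∧ T i j = Tile.Bump ∧
    (∀ i' j' : Fin n, T i' j' = Tile.Bump → (i', j') = (i, j)) ∧
    TracesTo T π ∧ Reduced T

/-- `T` is a bumpless pipe dream or an almost bumpless pipe dream of `π`. -/
def BPDorAlmost {n : ℕ} (T : Tiling n) (π : Equiv.Perm (Fin n)) : Prop :=
  IsBPD T π ∨ ∃ u v : Fin n, IsAlmostBPD T π u v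

/-- The set of positions of blank tiles of `T`. -/
def blanks {n : ℕ} (T : Tiling n) : Finset (Fin n × Fin n) :=
  Finset.univ.filter fun p => T p.1 p.2 = Tile.Blank

/-- The number of blank tiles of `T` in row `i`. -/
def rowBlanks {n : ℕ} (T : Tiling n) (i : Fin n) : ℕ :=
  (Finset.univ.filter fun j => T i j = Tile.Blank).card

open scoped Classical in
/-- The single Schubert polynomial of `π`, computed with bumpless pipe dreams:
`𝔖_π(x) = Σ_{D ∈ BPD(π)} Π_{(i,j) ∈ blank(D)} x_i`. -/
noncomputable def Schub (n : ℕ) (π : Equiv.Perm (Fin n)) : MvPolynomial (Fin n) ℤ :=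
  ∑ T : Tiling n, if IsBPD T π then ∏ p ∈ blanks T, MvPolynomial.X p.1 else 0

open scoped Classical in
/-- The double Schubert polynomial of `π`, computed with bumpless pipe dreams:
`𝔖_π(x, −y) = Σ_{D ∈ BPD(π)} Π_{(i,j) ∈ blank(D)} (x_i − y_j)`.
The variable `x_i` is `X (Sum.inl i)` and `y_j` is `X (Sum.inr j)`. -/
noncomputable def DSchub (n : ℕ) (π : Equiv.Perm (Fin n)) :
    MvPolynomial (Fin n ⊕ Fin n) ℤ :=
  ∑ T : Tiling n,
    if IsBPD T π then
      ∏ p ∈ blanks T,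
        (MvPolynomial.X (Sum.inl p.1) - MvPolynomial.X (Sum.inr p.2))
    else 0

/-- The Coxeter length of a permutation: its number of inversions. -/
def len {n : ℕ} (π : Equiv.Perm (Fin n)) : ℕ :=
  (Finset.univ.filter fun p : Fin n × Fin n => p.1 < p.2 ∧ π p.2 < π p.1).card

/-- `σ ⋗ π`: `σ` covers `π` in the strong Bruhat order, i.e. `σ = π·t` for some
transposition `t` and `ℓ(σ) = ℓ(π) + 1`. -/
def Covers {n : ℕ} (σ π : Equiv.Perm (Fin n)) : Prop :=
  (∃ a b : Fin n, a ≠ b ∧ σ = π * Equiv.swap a b) ∧ len σ = len π + 1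

end BPD

namespace BPD

/-- Swap the positions of a bump tile at `(u, v)` and a '+'-tile at `(i, j)`:
the bump tile is replaced by a '+'-tile and the '+'-tile by a bump tile. -/
def swapCrossBump {n : ℕ} (T : Tiling n) (u v i j : Fin n) : Tiling n := fun r c =>
  if r = u ∧ c = v then Tile.Cross
  else if r = i ∧ c = j then Tile.Bump
  else T r c

end BPD

namespace BPD

section Aux
variable {n : ℕ}

lemma step_not_inside (T : Tiling n) (s : PState n)
    (h : ∀ i j b, s ≠ PState.inside i j b) : stepSt T s = s := by
  cases s with
  | inside i j b => exact absurd rfl (h i j b)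
  | exited r => rfl
  | stuck => rfl

lemma inside_earlier (T : Tiling n) (s0 : PState n) (k m : ℕ)
    (h : ∃ i j b, (stepSt T)^[k + m] s0 = PState.inside i j b) :
    ∃ i j b, (stepSt T)^[k] s0 = PState.inside i j b := by
  by_contra hc
  push_neg at hc
  have hfix : stepSt T ((stepSt T)^[k] s0) = (stepSt T)^[k] s0 :=
    step_not_inside T _ (fun i j b hb => hc i j b hb)
  have heq : (stepSt T)^[k + m] s0 = (stepSt T)^[k] s0 := by
    rw [add_comm, Function.iterate_add_apply]
    exact Function.iterate_fixed hfix m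
  obtain ⟨i, j, b, hb⟩ := h
  exact hc i j b (heq ▸ hb)

lemma step_inside_cases (T : Tiling n) (i j i2 j2 : Fin n) (b b2 : Bool)
    (h : stepSt T (PState.inside i j b) = PState.inside i2 j2 b2) :
    ((i2 : ℕ) = i ∧ (j2 : ℕ) = (j : ℕ) + 1 ∧ b2 = false) ∨
    ((i2 : ℕ) + 1 = i ∧ (j2 : ℕ) = j ∧ b2 = true) := by
  have hE : goEast i j = PState.inside i2 j2 b2 →
      ((i2 : ℕ) = i ∧ (j2 : ℕ) = (j : ℕ) + 1 ∧ b2 = false) := by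
    intro hh
    unfold goEast at hh
    split at hh
    · rw [PState.inside.injEq] at hh
      obtain ⟨h1, h2, h3⟩ := hh
      refine ⟨by rw [h1], by rw [← h2], h3.symm⟩
    · exact absurd hh (by simp)
  have hN : goNorth i j = PState.inside i2 j2 b2 →
      ((i2 : ℕ) + 1 = i ∧ (j2 : ℕ) = j ∧ b2 = true) := by
    intro hh
    unfold goNorth at hh
    split at hh
    · rename_i hpos
      rw [PState.inside.injEq] at hh
      obtain ⟨h1, h2, h3⟩ := hh
      have : (i2 : ℕ) = (i : ℕ) - 1 := by rw [← h1]
      refine ⟨by omega, by rw [← h2], h3.symm⟩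
    · exact absurd hh (by simp)
  cases b <;> cases hT : T i j <;>
    simp only [stepSt, hT] at h <;>
    first
      | exact Or.inl (hE h)
      | exact Or.inr (hN h)
      | exact absurd h (by simp)

lemma step_true_cross (T : Tiling n) (r c : Fin n) (h : T r c = Tile.Cross) :
    stepSt T (PState.inside r c true) = goNorth r c := by simp [stepSt, h]

lemma step_false_cross (T : Tiling n) (r c : Fin n) (h : T r c = Tile.Cross) :
    stepSt T (PState.inside r c false) = goEast r c := by simp [stepSt, h]

lemma step_true_bump (T : Tiling n) (r c : Fin n) (h : T r c = Tile.Bump) :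
    stepSt T (PState.inside r c true) = goEast r c := by simp [stepSt, h]

lemma step_false_bump (T : Tiling n) (r c : Fin n) (h : T r c = Tile.Bump) :
    stepSt T (PState.inside r c false) = goNorth r c := by simp [stepSt, h]

lemma meas_iterate (T : Tiling n) (c : Fin n) :
    ∀ (k : ℕ) (i j : Fin n) (b : Bool), (stepSt T)^[k] (start c) = PState.inside i j b →
      (j : ℕ) + (n - 1 - (i : ℕ)) = (c : ℕ) + k := by
  intro k
  induction k with
  | zero =>
    intro i j b h
    simp only [Function.iterate_zero, id_eq, start, PState.inside.injEq] at h
    obtain ⟨h1, h2, _⟩ := h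
    have : (i : ℕ) = n - 1 := by rw [← h1]
    have : (j : ℕ) = c := by rw [← h2]
    omega
  | succ k ih =>
    intro i j b h
    rw [Function.iterate_succ_apply'] at h
    cases hs : (stepSt T)^[k] (start c) with
    | inside i' j' b' =>
      rw [hs] at h
      have hmeas := ih i' j' b' hs
      have hi' : (i' : ℕ) < n := i'.2
      rcases step_inside_cases T i' j' i j b' b h with ⟨h1, h2, _⟩ | ⟨h1, h2, _⟩ <;> omega
    | exited r => rw [hs] at h; exact absurd h (by simp [stepSt])
    | stuck => rw [hs] at h; exact absurd h (by simp [stepSt])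

lemma exit_unique (T : Tiling n) (c1 c2 : Fin n) (i0 j0 : Fin n) (b0 : Bool) (a b : ℕ)
    (h1 : (stepSt T)^[a] (start c1) = PState.inside i0 j0 b0)
    (h2 : (stepSt T)^[b] (start c2) = PState.inside i0 j0 b0)
    (r1 r2 : Fin n) (K1 K2 : ℕ)
    (e1 : (stepSt T)^[K1] (start c1) = PState.exited r1)
    (e2 : (stepSt T)^[K2] (start c2) = PState.exited r2) : r1 = r2 := by
  have exfix : ∀ (r : Fin n) (m : ℕ), (stepSt T)^[m] (PState.exited r : PState n) = PState.exited r :=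
    fun r m => Function.iterate_fixed rfl m
  have ha : a ≤ K1 := by
    by_contra hc
    have : (stepSt T)^[a] (start c1) = PState.exited r1 := by
      have : a = (a - K1) + K1 := by omega
      rw [this, Function.iterate_add_apply, e1, exfix]
    rw [h1] at this; exact absurd this (by simp)
  have hb : b ≤ K2 := by
    by_contra hc
    have : (stepSt T)^[b] (start c2) = PState.exited r2 := by
      have : b = (b - K2) + K2 := by omega
      rw [this, Function.iterate_add_apply, e2, exfix]
    rw [h2] at this; exact absurd this (by simp)
  have d1 : (stepSt T)^[K1 - a] (PState.inside i0 j0 b0) = PState.exited r1 := by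
    rw [← h1, ← Function.iterate_add_apply]
    have : K1 - a + a = K1 := by omega
    rw [this, e1]
  have d2 : (stepSt T)^[K2 - b] (PState.inside i0 j0 b0) = PState.exited r2 := by
    rw [← h2, ← Function.iterate_add_apply]
    have : K2 - b + b = K2 := by omega
    rw [this, e2]
  rcases le_total (K1 - a) (K2 - b) with hle | hle
  · have : (stepSt T)^[K2 - b] (PState.inside i0 j0 b0) = PState.exited r1 := by
      have heq : K2 - b = (K2 - b - (K1 - a)) + (K1 - a) := by omega
      rw [heq, Function.iterate_add_apply, d1, exfix]
    rw [d2] at this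
    exact (PState.exited.injEq r2 r1 ▸ this).symm ▸ rfl
  · have : (stepSt T)^[K1 - a] (PState.inside i0 j0 b0) = PState.exited r2 := by
      have heq : K1 - a = (K1 - a - (K2 - b)) + (K2 - b) := by omega
      rw [heq, Function.iterate_add_apply, d2, exfix]
    rw [d1] at this
    exact PState.exited.injEq r1 r2 ▸ this

lemma signLemma (F : ℕ → ℤ) (m : ℕ) (h0 : F 0 = 0)
    (hne : ∀ t, 0 < t → t < m → F t ≠ 0)
    (hstep : ∀ t, t + 1 ≤ m → F (t + 1) ≤ F t + 1)
    (h1 : F 1 = -1) (hm : F (m - 1) = 1) : False := by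
  rcases Nat.lt_or_ge m 2 with h | h
  · interval_cases m <;> simp_all
  · have key : ∀ t, 1 ≤ t → t ≤ m - 1 → F t < 0 := by
      intro t
      induction t with
      | zero => omega
      | succ t ih =>
        intro _ hub
        rcases Nat.eq_or_lt_of_le (show 1 ≤ t + 1 from by omega) with heq | hlt
        · rw [← heq]; omega
        · have ht1 : 1 ≤ t := by omega
          have hprev := ih ht1 (by omega)
          have hst := hstep t (by omega)
          have := hne (t + 1) (by omega) (by omega)
          omega
    have := key (m - 1) (by omega) le_rfl
    omega

end Aux
end BPD

namespace BPD
section Aux2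
variable {n : ℕ}

/-- column of an inside state (junk value otherwise) -/
def colOf : PState n → ℕ
  | PState.inside _ c _ => (c : ℕ)
  | _ => 0

lemma parity_contra (T : Tiling n) (u v i j : Fin n)
    (hbu : ∀ r c : Fin n, T r c = Tile.Bump → (r, c) = (u, v))
    (cp cq : Fin n) (xr yr : Fin n) (hxy : xr ≠ yr)
    (hex : ∃ K, (stepSt T)^[K] (start cp) = PState.exited xr)
    (hey : ∃ K, (stepSt T)^[K] (start cq) = PState.exited yr)
    (honce : ∀ r c : Fin n, crossingAt T cp cq r c → (r, c) = (i, j))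
    (ka la m : ℕ) (hm : 0 < m) (r1 c1 r2 c2 : Fin n) (βa : Bool)
    (hcells : ((r1, c1) = (i, j) ∧ (r2, c2) = (u, v)) ∨ ((r1, c1) = (u, v) ∧ (r2, c2) = (i, j)))
    (hPa : (stepSt T)^[ka] (start cp) = PState.inside r1 c1 βa)
    (hQa : (stepSt T)^[la] (start cq) = PState.inside r1 c1 (!βa))
    (hP1 : stepSt T (PState.inside r1 c1 βa) = goNorth r1 c1)
    (hQ1 : stepSt T (PState.inside r1 c1 (!βa)) = goEast r1 c1)
    (hPb : (stepSt T)^[ka + m] (start cp) = PState.inside r2 c2 true)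
    (hQb : (stepSt T)^[la + m] (start cq) = PState.inside r2 c2 false) : False := by
  -- insideness of intermediate states
  have hPin : ∀ t ≤ m, ∃ r c b, (stepSt T)^[ka + t] (start cp) = PState.inside r c b := by
    intro t ht
    apply inside_earlier T _ (ka + t) (m - t)
    have : ka + t + (m - t) = ka + m := by omega
    rw [this]
    exact ⟨r2, c2, true, hPb⟩
  have hQin : ∀ t ≤ m, ∃ r c b, (stepSt T)^[la + t] (start cq) = PState.inside r c b := by
    intro t ht
    apply inside_earlier T _ (la + t) (m - t)
    have : la + t + (la + m - (la + t)) = la + m := by omega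
    have h2 : la + t + (m - t) = la + m := by omega
    rw [h2]
    exact ⟨r2, c2, false, hQb⟩
  -- measure sync
  have hsync : (cp : ℕ) + ka = (cq : ℕ) + la := by
    have m1 := meas_iterate T cp ka r1 c1 βa hPa
    have m2 := meas_iterate T cq la r1 c1 (!βa) hQa
    omega
  -- the sign function
  set F : ℕ → ℤ := fun t => (colOf ((stepSt T)^[ka + t] (start cp)) : ℤ)
      - (colOf ((stepSt T)^[la + t] (start cq)) : ℤ) with hF
  have h0 : F 0 = 0 := by
    simp only [hF, Nat.add_zero, hPa, hQa, colOf]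
    omega
  -- F 1 = -1
  have h1 : F 1 = -1 := by
    have hp1 : (stepSt T)^[ka + 1] (start cp) = goNorth r1 c1 := by
      rw [Function.iterate_succ_apply', hPa, hP1]
    have hq1 : (stepSt T)^[la + 1] (start cq) = goEast r1 c1 := by
      rw [Function.iterate_succ_apply', hQa, hQ1]
    obtain ⟨rp, cpp, bp, hip⟩ := hPin 1 (by omega)
    obtain ⟨rq, cqq, bq, hiq⟩ := hQin 1 (by omega)
    have hgN : goNorth r1 c1 = PState.inside rp cpp bp := by rw [← hp1, hip]
    have hgE : goEast r1 c1 = PState.inside rq cqq bq := by rw [← hq1, hiq]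
    have hcp1 : (cpp : ℕ) = (c1 : ℕ) := by
      unfold goNorth at hgN
      split at hgN
      · rw [PState.inside.injEq] at hgN
        obtain ⟨_, h2, _⟩ := hgN; rw [← h2]
      · exact absurd hgN (by simp)
    have hcq1 : (cqq : ℕ) = (c1 : ℕ) + 1 := by
      unfold goEast at hgE
      split at hgE
      · rw [PState.inside.injEq] at hgE
        obtain ⟨_, h2, _⟩ := hgE; rw [← h2]
      · exact absurd hgE (by simp)
    simp only [hF, hip, hiq, colOf]
    omega
  -- F (m-1) = 1
  have hmlast : F (m - 1) = 1 := by
    obtain ⟨rp, cpp, bp, hip⟩ := hPin (m - 1) (by omega)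
    obtain ⟨rq, cqq, bq, hiq⟩ := hQin (m - 1) (by omega)
    have hsp : stepSt T (PState.inside rp cpp bp) = PState.inside r2 c2 true := by
      have h' : (stepSt T)^[ka + (m - 1) + 1] (start cp) = PState.inside r2 c2 true := by
        have : ka + (m - 1) + 1 = ka + m := by omega
        rw [this]; exact hPb
      rw [Function.iterate_succ_apply', hip] at h'
      exact h'
    have hsq : stepSt T (PState.inside rq cqq bq) = PState.inside r2 c2 false := by
      have h' : (stepSt T)^[la + (m - 1) + 1] (start cq) = PState.inside r2 c2 false := by
        have : la + (m - 1) + 1 = la + m := by omega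
        rw [this]; exact hQb
      rw [Function.iterate_succ_apply', hiq] at h'
      exact h'
    rcases step_inside_cases T rp cpp r2 c2 bp true hsp with ⟨_, _, hb⟩ | ⟨_, h2, _⟩
    · exact absurd hb (by simp)
    rcases step_inside_cases T rq cqq r2 c2 bq false hsq with ⟨_, h2', _⟩ | ⟨_, _, hb⟩
    swap
    · exact absurd hb (by simp)
    simp only [hF, hip, hiq, colOf]
    omega
  -- step bound
  have hstep : ∀ t, t + 1 ≤ m → F (t + 1) ≤ F t + 1 := by
    intro t ht
    obtain ⟨rp, cpp, bp, hip⟩ := hPin t (by omega)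
    obtain ⟨rq, cqq, bq, hiq⟩ := hQin t (by omega)
    obtain ⟨rp', cpp', bp', hip'⟩ := hPin (t + 1) ht
    obtain ⟨rq', cqq', bq', hiq'⟩ := hQin (t + 1) ht
    have hsp : stepSt T (PState.inside rp cpp bp) = PState.inside rp' cpp' bp' := by
      have h' : (stepSt T)^[ka + t + 1] (start cp) = PState.inside rp' cpp' bp' := by
        rw [Nat.add_assoc]; exact hip'
      rw [Function.iterate_succ_apply', hip] at h'
      exact h'
    have hsq : stepSt T (PState.inside rq cqq bq) = PState.inside rq' cqq' bq' := by
      have h' : (stepSt T)^[la + t + 1] (start cq) = PState.inside rq' cqq' bq' := by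
        rw [Nat.add_assoc]; exact hiq'
      rw [Function.iterate_succ_apply', hiq] at h'
      exact h'
    have hcp : (cpp' : ℕ) ≤ (cpp : ℕ) + 1 := by
      rcases step_inside_cases T rp cpp rp' cpp' bp bp' hsp with ⟨_, h2, _⟩ | ⟨_, h2, _⟩ <;> omega
    have hcq : (cqq : ℕ) ≤ (cqq' : ℕ) := by
      rcases step_inside_cases T rq cqq rq' cqq' bq bq' hsq with ⟨_, h2, _⟩ | ⟨_, h2, _⟩ <;> omega
    simp only [hF, hip, hiq, hip', hiq', colOf]
    omega
  -- no shared cells strictly in between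
  have hne : ∀ t, 0 < t → t < m → F t ≠ 0 := by
    intro t ht0 htm hFt
    obtain ⟨rp, cpp, bp, hip⟩ := hPin t (by omega)
    obtain ⟨rq, cqq, bq, hiq⟩ := hQin t (by omega)
    -- same column
    have hcol : (cpp : ℕ) = (cqq : ℕ) := by
      simp only [hF, hip, hiq, colOf] at hFt
      omega
    -- same row via measure
    have mp := meas_iterate T cp (ka + t) rp cpp bp hip
    have mq := meas_iterate T cq (la + t) rq cqq bq hiq
    have hrp : (rp : ℕ) < n := rp.2
    have hrq : (rq : ℕ) < n := rq.2
    have hrow : (rp : ℕ) = (rq : ℕ) := by omega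
    have hcell : rp = rq ∧ cpp = cqq := ⟨Fin.ext hrow, Fin.ext hcol⟩
    obtain ⟨hr, hc⟩ := hcell
    subst hr; subst hc
    -- measures of the endpoint cells
    have ma := meas_iterate T cp ka r1 c1 βa hPa
    have mb := meas_iterate T cp (ka + m) r2 c2 true hPb
    by_cases hbb : bp = bq
    · -- identical states: both pipes exit through the same row, contradiction
      subst hbb
      obtain ⟨K1, e1⟩ := hex
      obtain ⟨K2, e2⟩ := hey
      exact hxy (exit_unique T cp cq rp cpp bp (ka + t) (la + t) hip hiq xr yr K1 K2 e1 e2)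
    · -- opposite orientations: the tile carries both pipes, so it is Cross or Bump
      obtain ⟨rp', cpp', bp', hip'⟩ := hPin (t + 1) (by omega)
      obtain ⟨rq', cqq', bq', hiq'⟩ := hQin (t + 1) (by omega)
      have hsp : stepSt T (PState.inside rp cpp bp) = PState.inside rp' cpp' bp' := by
        have h' : (stepSt T)^[ka + t + 1] (start cp) = PState.inside rp' cpp' bp' := by
          rw [Nat.add_assoc]; exact hip'
        rw [Function.iterate_succ_apply', hip] at h'
        exact h'
      have hsq : stepSt T (PState.inside rp cpp bq) = PState.inside rq' cqq' bq' := by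
        have h' : (stepSt T)^[la + t + 1] (start cq) = PState.inside rq' cqq' bq' := by
          rw [Nat.add_assoc]; exact hiq'
        rw [Function.iterate_succ_apply', hiq] at h'
        exact h'
      have hbq : bq = !bp := by
        cases bp <;> cases bq <;> first | rfl | exact absurd rfl hbb
      subst hbq
      -- the cell is (i,j) or (u,v), both impossible by measure
      have hcr : T rp cpp = Tile.Cross ∨ T rp cpp = Tile.Bump := by
        cases htile : T rp cpp <;> cases bp <;>
          simp only [stepSt, htile, Bool.not_true, Bool.not_false] at hsp hsq <;>
          first
            | (left; rfl)
            | (right; rfl)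
            | exact absurd hsp (by simp)
            | exact absurd hsq (by simp)
      have hij' : (rp, cpp) = (i, j) ∨ (rp, cpp) = (u, v) := by
        rcases hcr with hcr | hcr
        · left
          apply honce
          refine ⟨hcr, ?_⟩
          cases bp
          · exact Or.inr ⟨⟨ka + t, hip⟩, ⟨la + t, by rw [hiq]; rfl⟩⟩
          · exact Or.inl ⟨⟨ka + t, hip⟩, ⟨la + t, by rw [hiq]; rfl⟩⟩
        · exact Or.inr (hbu rp cpp hcr)
      -- derive measure contradiction
      have mpmeas := meas_iterate T cp (ka + t) rp cpp bp hip
      rcases hij' with hc' | hc' <;> rcases hcells with ⟨ha1, ha2⟩ | ⟨ha1, ha2⟩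
      · have he : (rp, cpp) = (r1, c1) := by rw [hc', ha1]
        rw [Prod.mk.injEq] at he
        obtain ⟨e1, e2⟩ := he
        subst e1; subst e2
        omega
      · have he : (rp, cpp) = (r2, c2) := by rw [hc', ha2]
        rw [Prod.mk.injEq] at he
        obtain ⟨e1, e2⟩ := he
        subst e1; subst e2
        omega
      · have he : (rp, cpp) = (r2, c2) := by rw [hc', ha2]
        rw [Prod.mk.injEq] at he
        obtain ⟨e1, e2⟩ := he
        subst e1; subst e2
        omega
      · have he : (rp, cpp) = (r1, c1) := by rw [hc', ha1]
        rw [Prod.mk.injEq] at he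
        obtain ⟨e1, e2⟩ := he
        subst e1; subst e2
        omega
  exact signLemma F m h0 hne hstep h1 hmlast

end Aux2
end BPD

namespace BPD
section Aux3
variable {n : ℕ}

lemma stepSt_congr (T1 T2 : Tiling n) (r c : Fin n) (b : Bool) (h : T1 r c = T2 r c) :
    stepSt T1 (PState.inside r c b) = stepSt T2 (PState.inside r c b) := by
  simp only [stepSt, h]

lemma swap_eq_of_ne (T : Tiling n) (u v i j r c : Fin n)
    (h1 : ¬(r = u ∧ c = v)) (h2 : ¬(r = i ∧ c = j)) :
    swapCrossBump T u v i j r c = T r c := by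
  unfold swapCrossBump
  rw [if_neg h1, if_neg h2]

lemma iterate_agree (T : Tiling n) (u v i j : Fin n) (s0 : PState n) (K : ℕ)
    (h : ∀ k, k < K → ∀ r c b, (stepSt T)^[k] s0 = PState.inside r c b →
        ¬(r = u ∧ c = v) ∧ ¬(r = i ∧ c = j)) :
    (stepSt (swapCrossBump T u v i j))^[K] s0 = (stepSt T)^[K] s0 := by
  induction K with
  | zero => rfl
  | succ K ih =>
    rw [Function.iterate_succ_apply', Function.iterate_succ_apply',
      ih (fun k hk => h k (by omega))]
    cases hs : (stepSt T)^[K] s0 with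
    | inside r c b =>
      obtain ⟨h1, h2⟩ := h K (by omega) r c b hs
      exact stepSt_congr _ T r c b (swap_eq_of_ne T u v i j r c h1 h2)
    | exited r => rfl
    | stuck => rfl

end Aux3
end BPD

open BPD in
/-- **Lemma 5.** In an almost bumpless pipe dream of `π` with its bump tile at
`(u, v)`, suppose the pipes `p = π(x)` and `q = π(y)` (labeled by their entry
columns `π x`, `π y`) cross exactly once, at the '+'-tile `(i, j)`, and bump
(exactly) once, at `(u, v)`, with the r-shaped corner of the bump belonging to
`p` (i.e. `p` enters `(u,v)` from the south). After swapping the positions of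
the cross and the bump, the j-shaped turn in the new bump tile at `(i, j)`
belongs to `p` (i.e. `p` enters `(i,j)` from the west). -/
theorem cross_bump_swap_j (n : ℕ) (T : Tiling n) (π : Equiv.Perm (Fin n))
    (u v i j x y : Fin n)
    (hT : IsAlmostBPD T π u v)
    (hxy : x ≠ y)
    (hpr : reaches T (π x) (PState.inside u v true))
    (hqj : reaches T (π y) (PState.inside u v false))
    (hcross : crossingAt T (π x) (π y) i j)
    (honce : ∀ r c : Fin n, crossingAt T (π x) (π y) r c → (r, c) = (i, j)) :
    reaches (swapCrossBump T u v i j) (π x) (PState.inside i j false) := by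
  obtain ⟨hW, hbump, hbu, htr, hred⟩ := hT
  obtain ⟨hTij, hdisj⟩ := hcross
  obtain ⟨kb, hkb⟩ := hpr
  obtain ⟨lb, hlb⟩ := hqj
  have Mvp := meas_iterate T (π x) kb u v true hkb
  have Mvq := meas_iterate T (π y) lb u v false hlb
  have hT'uv : swapCrossBump T u v i j u v = Tile.Cross := by simp [swapCrossBump]
  rcases hdisj with ⟨⟨kc, hkc⟩, ⟨lc, hlc⟩⟩ | ⟨⟨kc, hkc⟩, ⟨lc, hlc⟩⟩
  · -- Branch A : p enters the cross from the south
    have Mjp := meas_iterate T (π x) kc i j true hkc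
    have Mjq := meas_iterate T (π y) lc i j false hlc
    have hkbkc : kc ≠ kb := by
      intro h
      rw [h, hkb, PState.inside.injEq] at hkc
      obtain ⟨h1, h2, _⟩ := hkc
      rw [← h1, ← h2, hbump] at hTij
      exact absurd hTij (by simp)
    rcases Nat.lt_or_ge kc kb with hlt | hge
    · -- cross strictly before bump on p's path : impossible (parity)
      exact (parity_contra T u v i j hbu (π x) (π y) x y hxy
        (htr x) (htr y) honce kc lc (kb - kc) (by omega) i j u v true
        (Or.inl ⟨rfl, rfl⟩) hkc
        (by simp only [Bool.not_true]; exact hlc)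
        (step_true_cross T i j hTij)
        (by simp only [Bool.not_true]; exact step_false_cross T i j hTij)
        (by have h : kc + (kb - kc) = kb := by omega
            rw [h]; exact hkb)
        (by have h : lc + (kb - kc) = lb := by omega
            rw [h]; exact hlb)).elim
    · -- bump before cross : follow p to the bump, then follow q to the cross
      have hkblt : kb < kc := by omega
      have hagreeK : (stepSt (swapCrossBump T u v i j))^[kb] (start (π x))
          = (stepSt T)^[kb] (start (π x)) := by
        apply iterate_agree
        intro k hk r c b hin
        have hmk := meas_iterate T (π x) k r c b hin
        constructor
        · rintro ⟨rfl, rfl⟩; omega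
        · rintro ⟨rfl, rfl⟩; omega
      have hlcm : lb + (kc - kb) = lc := by omega
      have hmain : ∀ t, 1 ≤ t → t ≤ kc - kb →
          (stepSt (swapCrossBump T u v i j))^[kb + t] (start (π x))
            = (stepSt T)^[lb + t] (start (π y)) := by
        intro t
        induction t with
        | zero => intro h1 _; exact absurd h1 (by omega)
        | succ t ih =>
          intro h1 h2
          rcases Nat.lt_or_ge 0 t with hlt1 | hge1
          · have ih' := ih (by omega) (by omega)
            rw [show kb + (t + 1) = (kb + t) + 1 by omega,
              show lb + (t + 1) = (lb + t) + 1 by omega,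
              Function.iterate_succ_apply', Function.iterate_succ_apply', ih']
            obtain ⟨r, c, b, hin⟩ : ∃ r c b,
                (stepSt T)^[lb + t] (start (π y)) = PState.inside r c b := by
              apply inside_earlier T _ (lb + t) (kc - kb - t)
              have h : lb + t + (kc - kb - t) = lc := by omega
              rw [h]
              exact ⟨i, j, false, hlc⟩
            rw [hin]
            apply stepSt_congr
            apply swap_eq_of_ne
            · rintro ⟨rfl, rfl⟩
              have := meas_iterate T (π y) (lb + t) _ _ b hin
              omega
            · rintro ⟨rfl, rfl⟩
              have := meas_iterate T (π y) (lb + t) _ _ b hin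
              omega
          · have ht0 : t = 0 := by omega
            subst ht0
            rw [show kb + (0 + 1) = kb + 1 by omega, show lb + (0 + 1) = lb + 1 by omega,
              Function.iterate_succ_apply', Function.iterate_succ_apply',
              hagreeK, hkb, hlb, step_true_cross _ u v hT'uv,
              step_false_bump T u v hbump]
      refine ⟨kb + (kc - kb), ?_⟩
      rw [hmain (kc - kb) (by omega) le_rfl, hlcm, hlc]
  · -- Branch B : p enters the cross from the west
    have Mjp := meas_iterate T (π x) kc i j false hkc
    have Mjq := meas_iterate T (π y) lc i j true hlc
    have hkbkc : kc ≠ kb := by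
      intro h
      rw [h, hkb, PState.inside.injEq] at hkc
      obtain ⟨h1, h2, _⟩ := hkc
      rw [← h1, ← h2, hbump] at hTij
      exact absurd hTij (by simp)
    rcases Nat.lt_or_ge kc kb with hlt | hge
    · -- cross before bump : follow p straight to the cross
      refine ⟨kc, ?_⟩
      have hagreeK : (stepSt (swapCrossBump T u v i j))^[kc] (start (π x))
          = (stepSt T)^[kc] (start (π x)) := by
        apply iterate_agree
        intro k hk r c b hin
        have hmk := meas_iterate T (π x) k r c b hin
        constructor
        · rintro ⟨rfl, rfl⟩; omega
        · rintro ⟨rfl, rfl⟩; omega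
      rw [hagreeK, hkc]
    · -- bump before cross with p entering the cross from the west : impossible
      have hkblt : kb < kc := by omega
      have honce' : ∀ r c : Fin n, crossingAt T (π y) (π x) r c → (r, c) = (i, j) := by
        intro r c hc
        obtain ⟨h1, h2⟩ := hc
        exact honce r c ⟨h1, h2.elim (fun hh => Or.inr ⟨hh.2, hh.1⟩)
          (fun hh => Or.inl ⟨hh.2, hh.1⟩)⟩
      exact (parity_contra T u v i j hbu (π y) (π x) y x
        (Ne.symm hxy) (htr y) (htr x) honce' lb kb (kc - kb) (by omega) u v i j false
        (Or.inr ⟨rfl, rfl⟩) hlb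
        (by simp only [Bool.not_false]; exact hkb)
        (step_false_bump T u v hbump)
        (by simp only [Bool.not_false]; exact step_true_bump T u v hbump)
        (by have h : lb + (kc - kb) = lc := by omega
            rw [h]; exact hlc)
        (by have h : kb + (kc - kb) = kc := by omega
            rw [h]; exact hkc)).elim
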